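/- arXiv:2008.06613 — 2 statements merged into one kernel-verified Lean document; each statement's English description precedes it below -/
import Mathlib

section
/- Let E be a Borel equivalence relation on a standard Borel space and let Γ and Δ be countably infinite groups. Then (E^ω)^{[Γ]} is Borel reducible to E^{[Γ×Δ]}. -/
/-- The Γ-jump of an equivalence relation `E` on `X`. -/
def GammaJump (Γ : Type*) [Group Γ] {X : Type*} (E : X → X → Prop) :
    (Γ → X) → (Γ → X) → Prop :=
  fun x y => ∃ γ : Γ, ∀ α : Γ, E (x (γ⁻¹ * α)) (y α)

/-- Borel reducibility of binary relations on measurable spaces. -/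
def BorelReducible {X Y : Type*} [MeasurableSpace X] [MeasurableSpace Y]
    (E : X → X → Prop) (F : Y → Y → Prop) : Prop :=
  ∃ f : X → Y, Measurable f ∧ ∀ x x', E x x' ↔ F (f x) (f x')

/-!
The reduction is `x ↦ ((γ, δ) ↦ x γ (c δ))` for a colouring `c : Δ → ℕ` in which, for
every shift `δ₀` and every colour `n`, some pair `δ₀⁻¹ * δ, δ` is monochromatic of colour `n`.
A shift `(γ₀, δ₀)` witnessing `E^{[Γ×Δ]}` between the images then yields, by evaluating at
such a `δ`, that `γ₀` witnesses `(E^ω)^{[Γ]}` coordinatewise. Such a colouring exists in any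
countably infinite group: enumerate all pairs `(δ₀, n)` and choose, one after another, pairwise
disjoint sets `{a, δ₀ * a}` to receive colour `n`.
-/

open Function

lemma Pairwise.exists_forall_mem_eq {ι α β : Type*} [Nonempty β] {s : ι → Set α}
    (hs : Pairwise (Disjoint on s)) (b : ι → β) :
    ∃ c : α → β, ∀ i, ∀ x ∈ s i, c x = b i := by
  classical
  refine ⟨fun x => if h : ∃ i, x ∈ s i then b h.choose else Classical.arbitrary β,
    fun i x hx => ?_⟩
  have h : ∃ i, x ∈ s i := ⟨i, hx⟩
  have hi : h.choose = i := by
    by_contra hne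
    exact Set.disjoint_left.mp (hs hne) h.choose_spec hx
  simp only [dif_pos h, hi]

def MonochromaticShifts {Δ β : Type*} [Group Δ] (c : Δ → β) : Prop :=
  ∀ δ₀ b, ∃ δ, c δ = b ∧ c (δ₀⁻¹ * δ) = b

section MonochromaticShifts

variable {Δ : Type*} [Group Δ] [Infinite Δ]

lemma exists_notMem_and_mul_notMem (s : Finset Δ) (g : Δ) : ∃ a, a ∉ s ∧ g * a ∉ s := by
  classical
  obtain ⟨a, ha⟩ := Infinite.exists_notMem_finset (s ∪ s.image (g⁻¹ * ·))
  simp only [Finset.mem_union, Finset.mem_image, not_or, not_exists, not_and] at ha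
  exact ⟨a, ha.1, fun h => ha.2 _ h (inv_mul_cancel_left g a)⟩

lemma exists_pairwise_disjoint_pairs (g : ℕ → Δ) :
    ∃ a : ℕ → Δ, Pairwise (Disjoint on fun k => ({a k, g k * a k} : Set Δ)) := by
  classical
  choose fresh hfresh using exists_notMem_and_mul_notMem (Δ := Δ)
  let pair (s : Finset Δ) (k : ℕ) : Finset Δ := {fresh s (g k), g k * fresh s (g k)}
  let used (k : ℕ) : Finset Δ := Nat.rec ∅ (fun k s => s ∪ pair s k) k
  have used_succ (k : ℕ) : used (k + 1) = used k ∪ pair (used k) k := rfl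
  have used_mono : Monotone used :=
    monotone_nat_of_le_succ fun k => by rw [used_succ]; exact Finset.subset_union_left
  refine ⟨fun k => fresh (used k) (g k), fun i j hij => Set.disjoint_left.mpr ?_⟩
  have enters_at_succ (k : ℕ) (δ : Δ)
      (hδ : δ ∈ ({fresh (used k) (g k), g k * fresh (used k) (g k)} : Set Δ)) :
      δ ∉ used k ∧ δ ∈ used (k + 1) := by
    rw [used_succ]
    rcases hδ with rfl | rfl
    · exact ⟨(hfresh _ _).1, by simp [pair]⟩
    · exact ⟨(hfresh _ _).2, by simp [pair]⟩
  intro δ hi hj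
  rcases hij.lt_or_gt with hlt | hlt
  · exact (enters_at_succ j δ hj).1 (used_mono hlt (enters_at_succ i δ hi).2)
  · exact (enters_at_succ i δ hi).1 (used_mono hlt (enters_at_succ j δ hj).2)

lemma exists_monochromaticShifts [Countable Δ] (β : Type*) [Countable β] [Nonempty β] :
    ∃ c : Δ → β, MonochromaticShifts c := by
  obtain ⟨e, he⟩ := exists_surjective_nat (Δ × β)
  obtain ⟨a, ha⟩ := exists_pairwise_disjoint_pairs fun k => (e k).1
  obtain ⟨c, hc⟩ := ha.exists_forall_mem_eq fun k => (e k).2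
  refine ⟨c, fun δ₀ b => ?_⟩
  obtain ⟨k, hk⟩ := he (δ₀, b)
  refine ⟨(e k).1 * a k, ?_, ?_⟩
  · simpa [hk] using hc k ((e k).1 * a k) (by simp)
  · simpa [hk] using hc k (a k) (by simp)

end MonochromaticShifts

theorem MonochromaticShifts.borelReducible_gammaJump_pi {X Γ Δ β : Type*} [MeasurableSpace X]
    [Group Γ] [Group Δ] {c : Δ → β} (hc : MonochromaticShifts c) (E : X → X → Prop) :
    BorelReducible (GammaJump Γ (fun x y : β → X => ∀ b, E (x b) (y b)))
      (GammaJump (Γ × Δ) E) := by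
  refine ⟨fun x p => x p.1 (c p.2), ?_, fun x y => ⟨?_, ?_⟩⟩
  · exact measurable_pi_lambda _ fun p =>
      (measurable_pi_apply (c p.2)).comp (measurable_pi_apply p.1)
  · rintro ⟨γ₀, h⟩
    exact ⟨(γ₀, 1), fun p => by simpa using h p.1 (c p.2)⟩
  · rintro ⟨⟨γ₀, δ₀⟩, h⟩
    refine ⟨γ₀, fun γ b => ?_⟩
    obtain ⟨δ, hδ, hδ₀δ⟩ := hc δ₀ b
    simpa [hδ, hδ₀δ] using h (γ, δ)

theorem omegaPower_gammaJump_borelReducible_prodJump_general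
    {X : Type*} [MeasurableSpace X]
    (E : X → X → Prop)
    (Γ Δ : Type*) [Group Γ]
    [Group Δ] [Countable Δ] [Infinite Δ] :
    BorelReducible (GammaJump Γ (fun x y : ℕ → X => ∀ n, E (x n) (y n)))
      (GammaJump (Γ × Δ) E) := by
  obtain ⟨c, hc⟩ := exists_monochromaticShifts (Δ := Δ) ℕ
  exact hc.borelReducible_gammaJump_pi E

/-- For a Borel equivalence relation `E` on a standard Borel space and
countably infinite groups `Γ` and `Δ`, `(E^ω)^{[Γ]}` is Borel reducible to `E^{[Γ×Δ]}`. -/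
theorem omegaPower_gammaJump_borelReducible_prodJump
    {X : Type*} [MeasurableSpace X] [StandardBorelSpace X]
    (E : X → X → Prop) (hE : Equivalence E)
    (hEBorel : MeasurableSet {p : X × X | E p.1 p.2})
    (Γ Δ : Type*) [Group Γ] [Countable Γ] [Infinite Γ]
    [Group Δ] [Countable Δ] [Infinite Δ] :
    BorelReducible (GammaJump Γ (fun x y : ℕ → X => ∀ n, E (x n) (y n)))
      (GammaJump (Γ × Δ) E) :=
  omegaPower_gammaJump_borelReducible_prodJump_general E Γ Δ
end

section
/- Let E be a Borel equivalence relation on a standard Borel space X with perfectly many classes. Then E^{[ℤ]}_free is Borel reducible to (E^{<ω})^{[ℤ]}_p.i., i.e., the restriction of E^{[ℤ]} to the free part of X^ℤ is Borel reducible to the restriction of (E^{<ω})^{[ℤ]} to the pairwise-inequivalent part. -/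
/-- `E^{<ω}`: coordinatewise equivalence of finite sequences of the same length. -/
def FinSeqRel {X : Type*} (E : X → X → Prop) :
    (Σ n : ℕ, Fin n → X) → (Σ n : ℕ, Fin n → X) → Prop :=
  fun x y => ∃ h : x.1 = y.1, ∀ i : Fin x.1, E (x.2 i) (y.2 (Fin.cast h i))

/-- `E` has perfectly many classes. -/
def PerfectlyManyClasses {X : Type*} [MeasurableSpace X] (E : X → X → Prop) : Prop :=
  ∃ f : (ℕ → Bool) → X, Measurable f ∧ Function.Injective f ∧
    ∀ a b, a ≠ b → ¬ E (f a) (f b)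

/-- The free part of `X^Γ`: those `x` such that for every `γ ≠ 1`, the shift `γ·x` is
not `E^Γ`-related to `x`. -/
def FreePart (Γ : Type*) [Group Γ] {X : Type*} (E : X → X → Prop) : Set (Γ → X) :=
  {x | ∀ γ : Γ, γ ≠ 1 → ¬ ∀ α : Γ, E (x (γ⁻¹ * α)) (x α)}

/-- The pairwise-inequivalent part of `X^Γ`. -/
def PIPart (Γ : Type*) {X : Type*} (E : X → X → Prop) : Set (Γ → X) :=
  {x | ∀ γ δ : Γ, γ ≠ δ → ¬ E (x γ) (x δ)}

/-!
Send `x : ℤ → X` to the sequence whose `n`-th term is the triple `(x n, x (s n), c (π n))`.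
Here `π n` is the pattern `(i, j) ↦ E (x (n + i)) (x (n + j))` seen from `n`, coded in `X` by
a measurable map `c` with pairwise `E`-inequivalent values, and `s n` is the first anchor at or
after `n`: the periods of the pattern form a subgroup `P ≤ ℤ`, and an anchor is a position whose
`E`-class does not recur along its `P`-coset. Everything is defined from the pattern alone, so
shifting `x` up to `E` shifts the image up to `E^{<ω}`; the first coordinates give the converse.

If two terms `a ≠ b` of the image were equivalent, their patterns would agree, so `b - a` would
be a nonzero period and the anchor coordinates `x (s a)` and `x (s b) = x (s a + (b - a))` would be
equivalent, which an anchor forbids. Anchors exist because `x` is free: otherwise every position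
recurs along some period, and a common multiple of these periods over the residues modulo one
positive period would be a shift fixing `x` up to `E`.
-/

open Function

section RelShift

variable {ρ : ℤ → ℤ → Prop} {g k n s : ℤ}

def relShift (g : ℤ) (ρ : ℤ → ℤ → Prop) : ℤ → ℤ → Prop := fun i j => ρ (i - g) (j - g)

theorem relShift_zero (ρ : ℤ → ℤ → Prop) : relShift 0 ρ = ρ := by
  funext i j
  simp [relShift]

theorem relShift_add (g h : ℤ) (ρ : ℤ → ℤ → Prop) :
    relShift (g + h) ρ = relShift g (relShift h ρ) := by
  funext i j
  simp only [relShift, sub_add_eq_sub_sub]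

theorem relShift_neg_relShift (g : ℤ) (ρ : ℤ → ℤ → Prop) : relShift (-g) (relShift g ρ) = ρ := by
  rw [← relShift_add, neg_add_cancel, relShift_zero]

theorem relShift_injective (g : ℤ) : Injective (relShift g) :=
  LeftInverse.injective (relShift_neg_relShift g)

def relPeriods (ρ : ℤ → ℤ → Prop) : AddSubgroup ℤ where
  carrier := {k | relShift k ρ = ρ}
  zero_mem' := relShift_zero ρ
  add_mem' {k l} hk hl := by
    change relShift (k + l) ρ = ρ
    rw [relShift_add, (hl : relShift l ρ = ρ), (hk : relShift k ρ = ρ)]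
  neg_mem' {k} hk := by
    change relShift (-k) ρ = ρ
    conv_lhs => rw [← hk]
    exact relShift_neg_relShift k ρ

theorem mem_relPeriods : k ∈ relPeriods ρ ↔ relShift k ρ = ρ := Iff.rfl

theorem mem_relPeriods_iff : k ∈ relPeriods ρ ↔ ∀ i j, ρ (i - k) (j - k) ↔ ρ i j := by
  simp only [mem_relPeriods, funext_iff, relShift, eq_iff_iff]

theorem rel_add_iff_of_mem (hk : k ∈ relPeriods ρ) (i j : ℤ) : ρ (i + k) (j + k) ↔ ρ i j := by
  simpa using mem_relPeriods_iff.1 (neg_mem hk) i j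

theorem relPeriods_relShift (g : ℤ) (ρ : ℤ → ℤ → Prop) :
    relPeriods (relShift g ρ) = relPeriods ρ := by
  ext k
  rw [mem_relPeriods, mem_relPeriods, ← relShift_add, add_comm, relShift_add,
    (relShift_injective g).eq_iff]

theorem rel_add_mul_of_mem (hρ : Equivalence ρ) (hk : k ∈ relPeriods ρ) (h : ρ s (s + k))
    (m : ℤ) : ρ s (s + m * k) := by
  have step : ∀ m : ℤ, ρ (s + m * k) (s + (m + 1) * k) := fun m => by
    have hmk : m * k ∈ relPeriods ρ := by simpa using zsmul_mem hk m
    rw [show s + (m + 1) * k = s + k + m * k by ring]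
    exact (rel_add_iff_of_mem hmk s (s + k)).2 h
  induction m using Int.induction_on with
  | zero => simpa using hρ.refl s
  | succ m ih => exact hρ.trans ih (step m)
  | pred m ih => exact hρ.trans ih (hρ.symm (by simpa using step (-m - 1)))

def IsAnchor (ρ : ℤ → ℤ → Prop) (s : ℤ) : Prop :=
  ∀ k ∈ relPeriods ρ, k ≠ 0 → ¬ ρ s (s + k)

theorem isAnchor_relShift : IsAnchor (relShift g ρ) s ↔ IsAnchor ρ (s - g) := by
  simp only [IsAnchor, relPeriods_relShift, relShift, add_sub_right_comm]

theorem isAnchor_add_of_mem (hk : k ∈ relPeriods ρ) : IsAnchor ρ (s + k) ↔ IsAnchor ρ s := by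
  conv_lhs => rw [← mem_relPeriods.1 hk]
  rw [isAnchor_relShift, add_sub_cancel_right]

noncomputable def nextAnchor (ρ : ℤ → ℤ → Prop) (n : ℤ) : ℤ :=
  n + sInf {t : ℕ | IsAnchor ρ (n + t)}

theorem nextAnchor_relShift : nextAnchor (relShift g ρ) n = nextAnchor ρ (n - g) + g := by
  simp only [nextAnchor, isAnchor_relShift, add_sub_right_comm]
  ring

theorem nextAnchor_add_of_mem (hk : k ∈ relPeriods ρ) :
    nextAnchor ρ (n + k) = nextAnchor ρ n + k := by
  conv_lhs => rw [← mem_relPeriods.1 hk]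
  rw [nextAnchor_relShift, add_sub_cancel_right]

theorem AddSubgroup.exists_pos_mem_of_ne_bot {G : Type*} [AddCommGroup G] [LinearOrder G]
    [IsOrderedAddMonoid G] {H : AddSubgroup G} (hH : H ≠ ⊥) : ∃ p ∈ H, 0 < p := by
  obtain ⟨⟨k, hk⟩, hk0⟩ := AddSubgroup.ne_bot_iff_exists_ne_zero.1 hH
  exact ⟨|k|, abs_mem_iff.2 hk, abs_pos.2 (by simpa using hk0)⟩

theorem exists_isAnchor (hρ : Equivalence ρ) (hfree : ∀ k ≠ 0, ¬ ∀ a, ρ (a - k) a)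
    (hP : relPeriods ρ ≠ ⊥) : ∃ s, IsAnchor ρ s := by
  obtain ⟨p, hpP, hp⟩ := AddSubgroup.exists_pos_mem_of_ne_bot hP
  by_contra! hno
  have hrec : ∀ s, ∃ k ∈ relPeriods ρ, k ≠ 0 ∧ ρ s (s + k) := by
    simpa [IsAnchor] using hno
  choose k hkP hk0 hk using hrec
  set L := ∏ r ∈ Finset.Ico 0 p, k r
  have hL0 : L ≠ 0 := Finset.prod_ne_zero_iff.2 fun r _ => hk0 r
  have hresidue : ∀ r ∈ Finset.Ico 0 p, ρ r (r + L) := fun r hr => by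
    obtain ⟨m, hm⟩ : k r ∣ L := Finset.dvd_prod_of_mem k hr
    rw [hm, mul_comm]
    exact rel_add_mul_of_mem hρ (hkP r) (hk r) m
  refine hfree L hL0 fun a => ?_
  have hr : (a - L) % p ∈ Finset.Ico 0 p :=
    Finset.mem_Ico.2 ⟨Int.emod_nonneg _ hp.ne', Int.emod_lt_of_pos _ hp⟩
  have hq : (a - L) / p * p ∈ relPeriods ρ := by simpa using zsmul_mem hpP ((a - L) / p)
  have hdecomp := Int.emod_add_ediv_mul (a - L) p
  convert (rel_add_iff_of_mem hq _ _).2 (hresidue _ hr) using 1 <;> linarith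

theorem isAnchor_nextAnchor (hρ : Equivalence ρ) (hfree : ∀ k ≠ 0, ¬ ∀ a, ρ (a - k) a)
    (hP : relPeriods ρ ≠ ⊥) (n : ℤ) : IsAnchor ρ (nextAnchor ρ n) := by
  obtain ⟨s, hs⟩ := exists_isAnchor hρ hfree hP
  obtain ⟨p, hpP, hp⟩ := AddSubgroup.exists_pos_mem_of_ne_bot hP
  have hle : n ≤ s + |n - s| * p := by nlinarith [le_abs_self (n - s), abs_nonneg (n - s)]
  obtain ⟨t, ht⟩ := Int.eq_ofNat_of_zero_le (sub_nonneg.2 hle)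
  refine Nat.sInf_mem (s := {t : ℕ | IsAnchor ρ (n + t)}) ⟨t, ?_⟩
  have hmp : |n - s| * p ∈ relPeriods ρ := by simpa using zsmul_mem hpP |n - s|
  simpa [← ht] using (isAnchor_add_of_mem hmp).2 hs

open Classical in
noncomputable def relPattern (ρ : ℤ → ℤ → Prop) (n : ℤ) : ℤ × ℤ → Bool :=
  fun p => decide (ρ (n + p.1) (n + p.2))

theorem relPattern_relShift : relPattern (relShift g ρ) n = relPattern ρ (n - g) := by
  funext p
  exact decide_eq_decide.2 <| by simp only [relShift, add_sub_right_comm]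

theorem sub_mem_relPeriods_of_relPattern_eq {a b : ℤ} (h : relPattern ρ a = relPattern ρ b) :
    b - a ∈ relPeriods ρ := by
  refine mem_relPeriods_iff.2 fun i j => ?_
  have := congrFun h (i - b, j - b)
  simp only [relPattern, decide_eq_decide, add_sub_cancel] at this
  convert this using 2 <;> ring

end RelShift

section Reduction

variable {X : Type*} {E : X → X → Prop} {c : (ℤ × ℤ → Bool) → X} {z z' : ℤ → X} {g : ℤ}

theorem finSeqRel_mk_iff {m : ℕ} {v w : Fin m → X} :
    FinSeqRel E ⟨m, v⟩ ⟨m, w⟩ ↔ ∀ i, E (v i) (w i) :=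
  ⟨fun ⟨_, h⟩ => h, fun h => ⟨rfl, h⟩⟩

variable (E c) in
noncomputable def jumpReduction (z : ℤ → X) (n : ℤ) : Σ m : ℕ, Fin m → X :=
  ⟨3, ![z n, z (nextAnchor (E on z) n), c (relPattern (E on z) n)]⟩

theorem finSeqRel_jumpReduction_iff {a b : ℤ} :
    FinSeqRel E (jumpReduction E c z a) (jumpReduction E c z' b) ↔
      E (z a) (z' b) ∧ E (z (nextAnchor (E on z) a)) (z' (nextAnchor (E on z') b)) ∧
        E (c (relPattern (E on z) a)) (c (relPattern (E on z') b)) := by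
  simp [jumpReduction, finSeqRel_mk_iff, Fin.forall_fin_succ]

theorem onFun_eq_relShift (hE : Equivalence E) (h : ∀ a, E (z (a - g)) (z' a)) :
    (E on z') = relShift g (E on z) := by
  funext i j
  exact propext ⟨fun hij => hE.trans (hE.trans (h i) hij) (hE.symm (h j)),
    fun hij => hE.trans (hE.trans (hE.symm (h i)) hij) (h j)⟩

theorem finSeqRel_jumpReduction_sub (hE : Equivalence E) (h : ∀ a, E (z (a - g)) (z' a))
    (n : ℤ) : FinSeqRel E (jumpReduction E c z (n - g)) (jumpReduction E c z' n) := by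
  rw [finSeqRel_jumpReduction_iff, onFun_eq_relShift hE h, nextAnchor_relShift,
    relPattern_relShift]
  refine ⟨h n, ?_, hE.refl _⟩
  simpa using h (nextAnchor (E on z) (n - g) + g)

theorem exists_shift_jumpReduction_iff (hE : Equivalence E) :
    (∃ g, ∀ a, E (z (a - g)) (z' a)) ↔
      ∃ g, ∀ a, FinSeqRel E (jumpReduction E c z (a - g)) (jumpReduction E c z' a) :=
  ⟨fun ⟨g, h⟩ => ⟨g, finSeqRel_jumpReduction_sub hE h⟩,
    fun ⟨g, h⟩ => ⟨g, fun a => (finSeqRel_jumpReduction_iff.1 (h a)).1⟩⟩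

theorem not_finSeqRel_jumpReduction (hE : Equivalence E)
    (hc : ∀ p q, p ≠ q → ¬ E (c p) (c q)) (hfree : ∀ k ≠ 0, ¬ ∀ a, E (z (a - k)) (z a))
    {a b : ℤ} (hab : a ≠ b) : ¬ FinSeqRel E (jumpReduction E c z a) (jumpReduction E c z b) := by
  rw [finSeqRel_jumpReduction_iff]
  rintro ⟨-, hanchor, hpattern⟩
  have hk : b - a ∈ relPeriods (E on z) :=
    sub_mem_relPeriods_of_relPattern_eq (by_contra fun hne => hc _ _ hne hpattern)
  have hk0 : b - a ≠ 0 := sub_ne_zero.2 hab.symm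
  have hP : relPeriods (E on z) ≠ ⊥ :=
    AddSubgroup.ne_bot_iff_exists_ne_zero.2 ⟨⟨_, hk⟩, by simpa using hk0⟩
  rw [← add_sub_cancel a b, nextAnchor_add_of_mem hk] at hanchor
  exact isAnchor_nextAnchor (hE.comap z) hfree hP a _ hk hk0 hanchor

end Reduction

section Measurability

variable {α : Type*} [MeasurableSpace α]

theorem measurable_sInf_setOf_nat {p : α → ℕ → Prop} (hp : ∀ t, Measurable fun x => p x t) :
    Measurable fun x => sInf {t | p x t} := by
  refine measurable_to_countable' fun m => ?_
  have hchar : ∀ x, sInf {t | p x t} = m ↔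
      (p x m ∧ ∀ l < m, ¬ p x l) ∨ (m = 0 ∧ ∀ t, ¬ p x t) := fun x => by
    constructor
    · rintro rfl
      by_cases hne : {t | p x t}.Nonempty
      · exact .inl ⟨Nat.sInf_mem hne, fun l hl => Nat.notMem_of_lt_sInf hl⟩
      · rw [Set.not_nonempty_iff_eq_empty.1 hne, Nat.sInf_empty]
        exact .inr ⟨rfl, fun t ht => hne ⟨t, ht⟩⟩
    · rintro (⟨hm, hmin⟩ | ⟨rfl, hnone⟩)
      · exact IsLeast.csInf_eq ⟨hm, fun l hl => not_lt.1 fun hlt => hmin l hlt hl⟩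
      · rw [Set.eq_empty_of_forall_notMem (s := {t | p x t}) hnone, Nat.sInf_empty]
  simp only [Set.preimage, Set.mem_singleton_iff, hchar]
  refine measurableSet_setOfPred.2 <| .or ?_ ?_
  · exact (hp m).and <| .forall fun l => measurable_const.imp (hp l).not
  · exact measurable_const.and <| .forall fun t => (hp t).not

theorem Measurable.decide {p : α → Prop} [DecidablePred p] (hp : Measurable p) :
    Measurable fun x => decide (p x) := by
  refine measurable_to_countable' fun b => ?_
  cases b
  · simpa [Set.preimage] using hp.not.setOf
  · simpa [Set.preimage] using hp.setOf

variable {ρ : α → ℤ → ℤ → Prop}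

theorem measurable_mem_relPeriods (hρ : ∀ i j, Measurable fun x => ρ x i j) (k : ℤ) :
    Measurable fun x => k ∈ relPeriods (ρ x) := by
  simp only [mem_relPeriods_iff]
  exact .forall fun i => .forall fun j => (hρ _ _).iff (hρ _ _)

theorem measurable_isAnchor (hρ : ∀ i j, Measurable fun x => ρ x i j) (s : ℤ) :
    Measurable fun x => IsAnchor (ρ x) s :=
  .forall fun k => (measurable_mem_relPeriods hρ k).imp <| measurable_const.imp (hρ _ _).not

theorem measurable_nextAnchor (hρ : ∀ i j, Measurable fun x => ρ x i j) (n : ℤ) :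
    Measurable fun x => nextAnchor (ρ x) n :=
  (Measurable.of_discrete (f := fun t : ℕ => n + (t : ℤ))).comp <|
    measurable_sInf_setOf_nat fun t => measurable_isAnchor hρ (n + t)

theorem measurable_relPattern (hρ : ∀ i j, Measurable fun x => ρ x i j) (n : ℤ) :
    Measurable fun x => relPattern (ρ x) n := by
  classical
  exact measurable_pi_lambda _ fun p => (hρ _ _).decide

end Measurability

theorem measurable_sigmaMk {ι : Type*} {β : ι → Type*} [∀ i, MeasurableSpace (β i)] (i : ι) :
    Measurable (Sigma.mk (β := β) i) :=
  fun _ hs => MeasurableSpace.measurableSet_iInf.1 hs i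

theorem measurable_jumpReduction {X : Type*} [MeasurableSpace X] {E : X → X → Prop}
    {c : (ℤ × ℤ → Bool) → X} (hE : Measurable fun q : X × X => E q.1 q.2) (hc : Measurable c) :
    Measurable (jumpReduction E c) := by
  have hρ (i j : ℤ) : Measurable fun z : ℤ → X => (E on z) i j :=
    hE.comp (f := fun z : ℤ → X => (z i, z j))
      ((measurable_pi_apply i).prodMk (measurable_pi_apply j))
  have heval : Measurable fun q : (ℤ → X) × ℤ => q.1 q.2 :=
    measurable_from_prod_countable_left fun m => measurable_pi_apply m
  refine measurable_pi_lambda _ fun n =>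
    (measurable_sigmaMk 3).comp <| measurable_pi_iff.2 fun i => ?_
  fin_cases i
  · exact measurable_pi_apply n
  · exact heval.comp (measurable_id.prodMk (measurable_nextAnchor hρ n))
  · exact hc.comp (measurable_relPattern hρ n)

theorem PerfectlyManyClasses.exists_measurable_pairwise {X : Type*} [MeasurableSpace X]
    {E : X → X → Prop} (h : PerfectlyManyClasses E) (ι : Type*) [Denumerable ι] :
    ∃ c : (ι → Bool) → X, Measurable c ∧ ∀ p q, p ≠ q → ¬ E (c p) (c q) := by
  obtain ⟨f, hf, -, hfE⟩ := h
  let e := Denumerable.eqv ι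
  exact ⟨fun p => f (p ∘ e.symm), hf.comp (measurable_pi_lambda _ fun m => measurable_pi_apply _),
    fun p q hpq => hfE _ _ (e.symm.surjective.injective_comp_right.ne hpq)⟩

section Multiplicative

open Multiplicative

variable {Y : Type*} (R : Y → Y → Prop)

theorem gammaJump_comp_toAdd_iff (u v : ℤ → Y) :
    GammaJump (Multiplicative ℤ) R (u ∘ toAdd) (v ∘ toAdd) ↔ ∃ g : ℤ, ∀ a, R (u (a - g)) (v a) := by
  simp only [GammaJump, ofAdd.surjective.exists, ofAdd.surjective.forall, comp_apply, toAdd_mul,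
    toAdd_inv, toAdd_ofAdd, neg_add_eq_sub]

theorem comp_toAdd_mem_freePart_iff (u : ℤ → Y) :
    u ∘ toAdd ∈ FreePart (Multiplicative ℤ) R ↔ ∀ k ≠ 0, ¬ ∀ a, R (u (a - k)) (u a) := by
  simp only [FreePart, Set.mem_ofPred_eq, ofAdd.surjective.forall, comp_apply, toAdd_mul,
    toAdd_inv, toAdd_ofAdd, neg_add_eq_sub, ne_eq, ofAdd_eq_one]

theorem comp_toAdd_mem_pIPart_iff (v : ℤ → Y) :
    v ∘ toAdd ∈ PIPart (Multiplicative ℤ) R ↔ ∀ a b, a ≠ b → ¬ R (v a) (v b) := by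
  simp only [PIPart, Set.mem_ofPred_eq, ofAdd.surjective.forall, comp_apply, toAdd_ofAdd, ne_eq,
    ofAdd.injective.eq_iff]

end Multiplicative

theorem free_part_reducible_pi_part_general
    {X : Type*} [MeasurableSpace X]
    (E : X → X → Prop) (hE : Equivalence E)
    (hEBorel : MeasurableSet {p : X × X | E p.1 p.2})
    (hperf : PerfectlyManyClasses E) :
    BorelReducible
      (fun a b : FreePart (Multiplicative ℤ) E => GammaJump (Multiplicative ℤ) E a.1 b.1)
      (fun a b : PIPart (Multiplicative ℤ) (FinSeqRel E) =>
        GammaJump (Multiplicative ℤ) (FinSeqRel E) a.1 b.1) := by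
  obtain ⟨c, hc, hcE⟩ := hperf.exists_measurable_pairwise (ℤ × ℤ)
  let u (x : Multiplicative ℤ → X) : ℤ → X := x ∘ Multiplicative.ofAdd
  let f (x : Multiplicative ℤ → X) := jumpReduction E c (u x) ∘ Multiplicative.toAdd
  have hf : Measurable f := measurable_pi_lambda _ fun γ => (measurable_pi_apply _).comp <|
    (measurable_jumpReduction (measurableSet_setOfPred.1 hEBorel) hc).comp <|
      measurable_pi_lambda _ fun a => measurable_pi_apply _
  have hpairwise (x : FreePart (Multiplicative ℤ) E) (a b : ℤ) (hab : a ≠ b) :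
      ¬ FinSeqRel E (f x a) (f x b) :=
    not_finSeqRel_jumpReduction hE hcE ((comp_toAdd_mem_freePart_iff E (u x)).1 x.2) hab
  refine ⟨fun x => ⟨f x, (comp_toAdd_mem_pIPart_iff _ _).2 (hpairwise x)⟩,
    (hf.comp measurable_subtype_coe).subtype_mk, fun x y => ?_⟩
  exact (gammaJump_comp_toAdd_iff E (u x) (u y)).trans <|
    (exists_shift_jumpReduction_iff hE).trans (gammaJump_comp_toAdd_iff _ _ _).symm

/-- If `E` is a Borel equivalence relation with perfectly many classes,
then `E^{[ℤ]}` restricted to the free part is Borel reducible to `(E^{<ω})^{[ℤ]}`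
restricted to the pairwise-inequivalent part. -/
theorem free_part_reducible_pi_part
    {X : Type*} [MeasurableSpace X] [StandardBorelSpace X]
    (E : X → X → Prop) (hE : Equivalence E)
    (hEBorel : MeasurableSet {p : X × X | E p.1 p.2})
    (hperf : PerfectlyManyClasses E) :
    BorelReducible
      (fun a b : FreePart (Multiplicative ℤ) E => GammaJump (Multiplicative ℤ) E a.1 b.1)
      (fun a b : PIPart (Multiplicative ℤ) (FinSeqRel E) =>
        GammaJump (Multiplicative ℤ) (FinSeqRel E) a.1 b.1) :=
  free_part_reducible_pi_part_general E hE hEBorel hperf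
end
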